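/- Let Z = (z_1,…,z_{N'}) : M^{1+n} → ℂ^{N'} satisfy □z_i = 0 and ∂^μ z_i ∂_μ z_j = 0 for all i,j. If functions f_j, g_j : ℂ^{N'} × ℂ^{N'} → ℂ (of Z and its conjugate) satisfy ∂f_j/∂z̄_k + ∂g_k/∂z_j = 0 for all j,k, then the current J_μ = Σ_j (f_j ∂_μ z_j + g_j ∂_μ z̄_j) is conserved: ∂^μ J_μ = 0. -/

import Mathlib

/-!
By the chain rule, `∂_μ F(Z, Z̄) = Σ_k (∂F/∂z_k ∂_μ z_k + ∂F/∂z̄_k ∂_μ z̄_k)`, so `∂^μ J_μ` is a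
combination of `□z_j`, `□z̄_j`, the contractions `∂^μ z_k ∂_μ z_j` and their conjugates, all of
which vanish, and of the mixed terms `Σ_{j,k} (∂f_j/∂z̄_k + ∂g_k/∂z_j) ∂^μ z̄_k ∂_μ z_j`, which
vanish by the multiplier condition.
-/

/-- The partial derivative `∂_μ` of a function on `(1+n)`-dimensional
Minkowski space `M^{1+n} = Fin (n+1) → ℝ` (coordinate `0` is time). -/
noncomputable def pd {n : ℕ} {E : Type*} [NormedAddCommGroup E] [NormedSpace ℝ E]
    (μ : Fin (n + 1)) (f : (Fin (n + 1) → ℝ) → E) (x : Fin (n + 1) → ℝ) : E :=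
  deriv (fun t : ℝ => f (x + t • (Pi.single μ 1 : Fin (n + 1) → ℝ))) 0

/-- The Minkowski signed sum `Σ'_μ A_μ = A_0 − Σ_{i=1}^n A_i`, implementing
index contraction with the metric `diag(1,−1,…,−1)`. -/
def msum {n : ℕ} {E : Type*} [AddCommGroup E] (A : Fin (n + 1) → E) : E :=
  A 0 - ∑ i ∈ Finset.univ.erase (0 : Fin (n + 1)), A i

section Minkowski

variable {n : ℕ}

theorem msum_add {E : Type*} [AddCommGroup E] (A B : Fin (n + 1) → E) :
    msum (fun μ => A μ + B μ) = msum A + msum B := by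
  simp only [msum, Finset.sum_add_distrib]
  abel

theorem msum_sum {E ι : Type*} [AddCommGroup E] (s : Finset ι) (A : ι → Fin (n + 1) → E) :
    msum (fun μ => ∑ j ∈ s, A j μ) = ∑ j ∈ s, msum (A j) := by
  simp only [msum, Finset.sum_sub_distrib]
  rw [Finset.sum_comm]

theorem msum_mul_left {R : Type*} [NonUnitalNonAssocRing R] (c : R) (A : Fin (n + 1) → R) :
    msum (fun μ => c * A μ) = c * msum A := by
  simp only [msum, Finset.mul_sum, mul_sub]

theorem msum_star {E : Type*} [AddCommGroup E] [StarAddMonoid E] (A : Fin (n + 1) → E) :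
    msum (fun μ => star (A μ)) = star (msum A) := by
  simp only [msum, star_sub, star_sum]

variable {E : Type*} [NormedAddCommGroup E] [NormedSpace ℝ E]
  {f : (Fin (n + 1) → ℝ) → E} {x : Fin (n + 1) → ℝ}

theorem DifferentiableAt.hasDerivAt_pd (hf : DifferentiableAt ℝ f x) (μ : Fin (n + 1)) :
    HasDerivAt (fun t : ℝ => f (x + t • (Pi.single μ 1 : Fin (n + 1) → ℝ))) (pd μ f x) 0 := by
  have hline :
      DifferentiableAt ℝ (fun t : ℝ => x + t • (Pi.single μ 1 : Fin (n + 1) → ℝ)) 0 := by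
    fun_prop
  have hf0 : DifferentiableAt ℝ f (x + (0 : ℝ) • (Pi.single μ 1 : Fin (n + 1) → ℝ)) := by
    simpa using hf
  exact (hf0.comp 0 hline).hasDerivAt

theorem pd_eq_fderiv (hf : DifferentiableAt ℝ f x) (μ : Fin (n + 1)) :
    pd μ f x = fderiv ℝ f x (Pi.single μ 1) := by
  have hline : HasDerivAt (fun t : ℝ => x + t • (Pi.single μ 1 : Fin (n + 1) → ℝ))
      (Pi.single μ 1) 0 := by
    simpa using
      ((hasDerivAt_id (0 : ℝ)).smul_const (Pi.single μ 1 : Fin (n + 1) → ℝ)).const_add x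
  exact (hf.hasFDerivAt.comp_hasDerivAt_of_eq 0 hline (by simp)).deriv

theorem ContDiff.pd {k : WithTop ℕ∞} (hf : ContDiff ℝ (k + 1) f) (μ : Fin (n + 1)) :
    ContDiff ℝ k (_root_.pd μ f) := by
  have hdiff : Differentiable ℝ f := hf.differentiable (by simp)
  rw [show _root_.pd μ f = fun y => fderiv ℝ f y (Pi.single μ 1) from
    funext fun y => pd_eq_fderiv (hdiff y) μ]
  exact (hf.fderiv_right le_rfl).clm_apply contDiff_const

theorem pd_add {g : (Fin (n + 1) → ℝ) → E} (hf : DifferentiableAt ℝ f x)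
    (hg : DifferentiableAt ℝ g x) (μ : Fin (n + 1)) :
    pd μ (fun y => f y + g y) x = pd μ f x + pd μ g x :=
  ((hf.hasDerivAt_pd μ).add (hg.hasDerivAt_pd μ)).deriv

theorem pd_sum {ι : Type*} {s : Finset ι} {φ : ι → (Fin (n + 1) → ℝ) → E}
    (hφ : ∀ j ∈ s, DifferentiableAt ℝ (φ j) x) (μ : Fin (n + 1)) :
    pd μ (fun y => ∑ j ∈ s, φ j y) x = ∑ j ∈ s, pd μ (φ j) x :=
  (HasDerivAt.fun_sum fun j hj => (hφ j hj).hasDerivAt_pd μ).deriv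

theorem pd_mul {𝔸 : Type*} [NormedRing 𝔸] [NormedAlgebra ℝ 𝔸] {a b : (Fin (n + 1) → ℝ) → 𝔸}
    (ha : DifferentiableAt ℝ a x) (hb : DifferentiableAt ℝ b x) (μ : Fin (n + 1)) :
    pd μ (fun y => a y * b y) x = pd μ a x * b x + a x * pd μ b x := by
  have h := ((ha.hasDerivAt_pd μ).fun_mul (hb.hasDerivAt_pd μ)).deriv
  simp only [zero_smul, add_zero] at h
  exact h

theorem pd_star [StarAddMonoid E] [ContinuousStar E] [StarModule ℝ E] (μ : Fin (n + 1)) :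
    pd μ (fun y => star (f y)) x = star (pd μ f x) :=
  deriv.star

end Minkowski

section Wirtinger

variable {ι : Type*} [Fintype ι] [DecidableEq ι]

/-- For `F` holomorphic in `(z, w)`, evaluated at `w = z̄`, these are the Wirtinger derivatives
`∂/∂z_k` and `∂/∂z̄_k` of `F(z, z̄)`. -/
noncomputable def partialZ (F : (ι → ℂ) → (ι → ℂ) → ℂ) (k : ι) (z w : ι → ℂ) : ℂ :=
  deriv (fun t : ℂ => F (Function.update z k t) w) (z k)

noncomputable def partialZbar (F : (ι → ℂ) → (ι → ℂ) → ℂ) (k : ι) (z w : ι → ℂ) : ℂ :=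
  deriv (fun t : ℂ => F z (Function.update w k t)) (w k)

variable {F : (ι → ℂ) → (ι → ℂ) → ℂ} {z w : ι → ℂ}

theorem partialZ_eq_fderiv
    (hF : DifferentiableAt ℂ (fun q : (ι → ℂ) × (ι → ℂ) => F q.1 q.2) (z, w)) (k : ι) :
    partialZ F k z w =
      fderiv ℂ (fun q : (ι → ℂ) × (ι → ℂ) => F q.1 q.2) (z, w) (Pi.single k 1, 0) :=
  (hF.hasFDerivAt.comp_hasDerivAt_of_eq (z k)
    ((hasDerivAt_update z k (z k)).prodMk (hasDerivAt_const _ w)) (by simp)).deriv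

theorem partialZbar_eq_fderiv
    (hF : DifferentiableAt ℂ (fun q : (ι → ℂ) × (ι → ℂ) => F q.1 q.2) (z, w)) (k : ι) :
    partialZbar F k z w =
      fderiv ℂ (fun q : (ι → ℂ) × (ι → ℂ) => F q.1 q.2) (z, w) (0, Pi.single k 1) :=
  (hF.hasFDerivAt.comp_hasDerivAt_of_eq (w k)
    ((hasDerivAt_const _ z).prodMk (hasDerivAt_update w k (w k))) (by simp)).deriv

theorem prod_eq_sum_single (u v : ι → ℂ) :
    ((u, v) : (ι → ℂ) × (ι → ℂ)) =
      ∑ k, (u k • ((Pi.single k 1, 0) : (ι → ℂ) × (ι → ℂ)) + v k • (0, Pi.single k 1)) := by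
  ext i <;> simp [Prod.fst_sum, Prod.snd_sum, Finset.sum_apply, Pi.single_apply]

theorem hasDerivAt_comp_sum_partial {u v : ℝ → ι → ℂ} {u' v' : ι → ℂ} {t : ℝ}
    (hF : DifferentiableAt ℂ (fun q : (ι → ℂ) × (ι → ℂ) => F q.1 q.2) (u t, v t))
    (hu : HasDerivAt u u' t) (hv : HasDerivAt v v' t) :
    HasDerivAt (fun s => F (u s) (v s))
      (∑ k, (partialZ F k (u t) (v t) * u' k + partialZbar F k (u t) (v t) * v' k)) t := by
  refine ((hF.hasFDerivAt.restrictScalars ℝ).comp_hasDerivAt t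
    (hu.prodMk hv)).congr_deriv ?_
  rw [ContinuousLinearMap.coe_restrictScalars', prod_eq_sum_single u' v', map_sum]
  simp only [map_add, map_smul, smul_eq_mul, partialZ_eq_fderiv hF, partialZbar_eq_fderiv hF]
  exact Finset.sum_congr rfl fun k _ => by ring

end Wirtinger

theorem msum_eq_zero_of_null {n : ℕ} {ι : Type*} [Fintype ι] (a b : ι → Fin (n + 1) → ℂ)
    (F G : ι → ℂ) (Fz Fw Gz Gw : ι → ι → ℂ)
    (hnull : ∀ i j, msum (fun μ => a i μ * a j μ) = 0) (hwave : ∀ j, msum (b j) = 0)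
    (hcond : ∀ j k, Fw j k + Gz k j = 0) :
    msum (fun μ => ∑ j, ((∑ k, (Fz j k * a k μ + Fw j k * star (a k μ))) * a j μ + F j * b j μ +
      ((∑ k, (Gz j k * a k μ + Gw j k * star (a k μ))) * star (a j μ) + G j * star (b j μ)))) =
      0 := by
  have hnull_star : ∀ i j, msum (fun μ => star (a i μ) * star (a j μ)) = 0 := fun i j => by
    rw [← star_zero, ← hnull j i, ← msum_star]
    simp only [star_mul]
  simp only [add_mul, Finset.sum_mul, mul_assoc, msum_add, msum_sum, msum_mul_left, hnull,
    hnull_star, msum_star, hwave, star_zero, mul_zero, add_zero, zero_add]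
  rw [Finset.sum_add_distrib, Finset.sum_comm (f := fun j k => Gz j k * _),
    ← Finset.sum_add_distrib]
  refine Finset.sum_eq_zero fun j _ => ?_
  rw [← Finset.sum_add_distrib]
  refine Finset.sum_eq_zero fun k _ => ?_
  simp only [mul_comm (a j _), ← add_mul, hcond, zero_mul]

section Current

variable {n : ℕ} {ι : Type*} [Fintype ι] {Z : (Fin (n + 1) → ℝ) → ι → ℂ}
  {x : Fin (n + 1) → ℝ}

noncomputable def current (f g : ι → (ι → ℂ) → (ι → ℂ) → ℂ) (Z : (Fin (n + 1) → ℝ) → ι → ℂ)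
    (μ : Fin (n + 1)) : (Fin (n + 1) → ℝ) → ℂ :=
  fun y => ∑ j, (f j (Z y) (fun i => star (Z y i)) * pd μ (fun y' => Z y' j) y +
    g j (Z y) (fun i => star (Z y i)) * pd μ (fun y' => star (Z y' j)) y)

theorem DifferentiableAt.comp_conj {F : (ι → ℂ) → (ι → ℂ) → ℂ}
    (hF : DifferentiableAt ℂ (fun q : (ι → ℂ) × (ι → ℂ) => F q.1 q.2)
      (Z x, fun i => star (Z x i)))
    (hZ : DifferentiableAt ℝ Z x) :
    DifferentiableAt ℝ (fun y => F (Z y) (fun i => star (Z y i))) x :=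
  (hF.restrictScalars ℝ).comp (f := fun y => (Z y, fun i => star (Z y i))) x
    (hZ.prodMk hZ.star)

variable [DecidableEq ι]

theorem pd_comp_conj {F : (ι → ℂ) → (ι → ℂ) → ℂ}
    (hF : DifferentiableAt ℂ (fun q : (ι → ℂ) × (ι → ℂ) => F q.1 q.2)
      (Z x, fun i => star (Z x i)))
    (hZ : DifferentiableAt ℝ Z x) (μ : Fin (n + 1)) :
    pd μ (fun y => F (Z y) (fun i => star (Z y i))) x =
      ∑ k, (partialZ F k (Z x) (fun i => star (Z x i)) * pd μ (fun y => Z y k) x +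
        partialZbar F k (Z x) (fun i => star (Z x i)) * star (pd μ (fun y => Z y k) x)) := by
  have hline : HasDerivAt (fun t : ℝ => Z (x + t • (Pi.single μ 1 : Fin (n + 1) → ℝ)))
      (fun k => pd μ (fun y => Z y k) x) 0 :=
    hasDerivAt_pi.2 fun k => (differentiableAt_pi.1 hZ k).hasDerivAt_pd μ
  have h := (hasDerivAt_comp_sum_partial (by simpa using hF) hline
    (hasDerivAt_pi.2 fun k => (hasDerivAt_pi.1 hline k).star)).deriv
  simp only [zero_smul, add_zero] at h
  exact h

theorem pd_current (hZ : ContDiff ℝ 2 Z) {f g : ι → (ι → ℂ) → (ι → ℂ) → ℂ}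
    (hf : ∀ j, DifferentiableAt ℂ (fun q : (ι → ℂ) × (ι → ℂ) => f j q.1 q.2)
      (Z x, fun i => star (Z x i)))
    (hg : ∀ j, DifferentiableAt ℂ (fun q : (ι → ℂ) × (ι → ℂ) => g j q.1 q.2)
      (Z x, fun i => star (Z x i)))
    (μ : Fin (n + 1)) :
    pd μ (current f g Z μ) x =
      ∑ j, ((∑ k, (partialZ (f j) k (Z x) (fun i => star (Z x i)) * pd μ (fun y => Z y k) x +
            partialZbar (f j) k (Z x) (fun i => star (Z x i)) * star (pd μ (fun y => Z y k) x))) *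
          pd μ (fun y => Z y j) x +
        f j (Z x) (fun i => star (Z x i)) * pd μ (pd μ (fun y => Z y j)) x +
        ((∑ k, (partialZ (g j) k (Z x) (fun i => star (Z x i)) * pd μ (fun y => Z y k) x +
            partialZbar (g j) k (Z x) (fun i => star (Z x i)) * star (pd μ (fun y => Z y k) x))) *
          star (pd μ (fun y => Z y j) x) +
        g j (Z x) (fun i => star (Z x i)) * star (pd μ (pd μ (fun y => Z y j)) x))) := by
  have hZ1 : DifferentiableAt ℝ Z x := hZ.differentiable (by norm_num) x
  have hdZ : ∀ j, Differentiable ℝ (pd μ (fun y => Z y j)) := fun j =>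
    ((contDiff_pi.1 hZ j).pd (k := 1) μ).differentiable one_ne_zero
  have hdZstar : ∀ j, DifferentiableAt ℝ (fun y => star (pd μ (fun y' => Z y' j) y)) x :=
    fun j => (hdZ j x).star
  have hfZ : ∀ j, DifferentiableAt ℝ (fun y => f j (Z y) (fun i => star (Z y i))) x :=
    fun j => (hf j).comp_conj hZ1
  have hgZ : ∀ j, DifferentiableAt ℝ (fun y => g j (Z y) (fun i => star (Z y i))) x :=
    fun j => (hg j).comp_conj hZ1
  unfold current
  simp only [pd_star]
  rw [pd_sum fun j _ => ((hfZ j).fun_mul (hdZ j x)).fun_add ((hgZ j).fun_mul (hdZstar j))]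
  refine Finset.sum_congr rfl fun j _ => ?_
  rw [pd_add ((hfZ j).fun_mul (hdZ j x)) ((hgZ j).fun_mul (hdZstar j)), pd_mul (hfZ j) (hdZ j x),
    pd_mul (hgZ j) (hdZstar j), pd_star, pd_comp_conj (hf j) hZ1, pd_comp_conj (hg j) hZ1]

end Current

/-- Multiplier method for conserved currents of the Grassmann submodel.
If `Z : M^{1+n} → ℂ^{N'}` satisfies `□z_i = 0` and `∂^μ z_i ∂_μ z_j = 0`, and
coefficient functions `f_j(Z,Z̄)`, `g_j(Z,Z̄)` (encoded as functions of the
independent variables `z` and `z̄ = w`) satisfy `∂f_j/∂z̄_k + ∂g_k/∂z_j = 0`,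
then the current `J_μ = Σ_j (f_j ∂_μ z_j + g_j ∂_μ z̄_j)` is conserved. -/
theorem multiplier_conserved_current {n N' : ℕ}
    (Z : (Fin (n + 1) → ℝ) → (Fin N' → ℂ))
    (hZ : ContDiff ℝ (⊤ : ℕ∞) Z)
    (hwave : ∀ i x, msum (fun μ => pd μ (pd μ (fun y => Z y i)) x) = 0)
    (hnull : ∀ i j x,
      msum (fun μ => pd μ (fun y => Z y i) x * pd μ (fun y => Z y j) x) = 0)
    (f g : Fin N' → (Fin N' → ℂ) → (Fin N' → ℂ) → ℂ)
    (hf : ∀ j, Differentiable ℂ (fun q : (Fin N' → ℂ) × (Fin N' → ℂ) => f j q.1 q.2))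
    (hg : ∀ j, Differentiable ℂ (fun q : (Fin N' → ℂ) × (Fin N' → ℂ) => g j q.1 q.2))
    (hcond : ∀ j k z w,
      deriv (fun t : ℂ => f j z (Function.update w k t)) (w k) +
        deriv (fun t : ℂ => g k (Function.update z j t) w) (z j) = 0) :
    ∀ x, msum (fun μ => pd μ (fun y =>
        ∑ j : Fin N',
          (f j (Z y) (fun i => star (Z y i)) * pd μ (fun y' => Z y' j) y +
            g j (Z y) (fun i => star (Z y i)) * pd μ (fun y' => star (Z y' j)) y)) x) = 0 := by
  intro x
  have hZ2 : ContDiff ℝ 2 Z := hZ.of_le (WithTop.coe_le_coe.2 le_top)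
  change msum (fun μ => pd μ (current f g Z μ) x) = 0
  simp only [pd_current hZ2 (fun j => hf j _) (fun j => hg j _)]
  exact msum_eq_zero_of_null (a := fun k μ => pd μ (fun y => Z y k) x)
    (b := fun j μ => pd μ (pd μ (fun y => Z y j)) x) _ _ _ _ _ _
    (fun i j => hnull i j x) (fun j => hwave j x) (fun j k => hcond j k _ _)
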